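/- arXiv:1804.10146 — 2 statements merged into one kernel-verified Lean document; each statement's English description precedes it below -/
import Mathlib

section
/- For every n ≥ 1, every bimachine over Σ_3 = {1,...,6} that represents the partial function f_n^{(3)} has at least 2^{c·(m−2)} + 1 total states, where m = 6n + 2 and c = (log₂ 3)/6; equivalently, it has at least 3^n + 1 total states. -/
/-- The full alphabet `Σ_k = {1, …, 2k}` (letters are natural numbers). -/
def SigmaFull (k : ℕ) : Set ℕ := {a | 1 ≤ a ∧ a ≤ 2 * k}

/-- The lower half alphabet `Σ'_k = {1, …, k}`. -/
def SigmaLo (k : ℕ) : Set ℕ := {a | 1 ≤ a ∧ a ≤ k}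

/-- The upper half alphabet `Σ''_k = {k+1, …, 2k}`. -/
def SigmaHi (k : ℕ) : Set ℕ := {a | k + 1 ≤ a ∧ a ≤ 2 * k}

/-- Words over a subalphabet `S`. -/
def Words (S : Set ℕ) : Set (List ℕ) := {w | ∀ a ∈ w, a ∈ S}

/-- The language `L^{(i,j)}_n = (Σ'_k)* · i · (Σ'_k)^{n-1} · (Σ''_k)^{n-1} · j · (Σ''_k)*`. -/
def Lang (k n i j : ℕ) : Set (List ℕ) :=
  {w | ∃ u x y v : List ℕ, u ∈ Words (SigmaLo k) ∧ x ∈ Words (SigmaLo k) ∧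
    x.length = n - 1 ∧ y ∈ Words (SigmaHi k) ∧ y.length = n - 1 ∧
    v ∈ Words (SigmaHi k) ∧ w = u ++ [i] ++ x ++ y ++ [j] ++ v}

/-- The graph of the partial function `f_n^{(k)}`: it maps `α` to the two-letter
word `ji` whenever `α ∈ L^{(i,j)}_n` for some `1 ≤ i ≤ k` and `k+1 ≤ j ≤ 2k`. -/
def fGraph (k n : ℕ) (α ω : List ℕ) : Prop :=
  ∃ i j : ℕ, 1 ≤ i ∧ i ≤ k ∧ k + 1 ≤ j ∧ j ≤ 2 * k ∧ α ∈ Lang k n i j ∧ ω = [j, i]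

/-- The domain of the partial function `f_n^{(k)}`. -/
def fDom (k n : ℕ) (α : List ℕ) : Prop := ∃ ω, fGraph k n α ω

/-- A bimachine over the alphabet of natural numbers, with word output:
two deterministic automata (all states final) and an output function `ψ`. -/
structure Bimachine (QL QR : Type) where
  sL : QL
  δL : QL → ℕ → QL
  sR : QR
  δR : QR → ℕ → QR
  ψ : QL → ℕ → QR → Option (List ℕ)

/-- The extended transition function `δ*` of a deterministic automaton. -/
def dstar {Q : Type} (δ : Q → ℕ → Q) (q : Q) (w : List ℕ) : Q := w.foldl δ q

/-- Auxiliary form of the generalized output function, by recursion on the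
reversed input word: `ψ*(l, ε, r) = ε` and
`ψ*(l, tσ, r) = ψ*(l, t, δ_R(r, σ)) · ψ(δ_L*(l, t), σ, r)`. -/
def psiStarRev {QL QR : Type} (B : Bimachine QL QR) (l : QL) :
    List ℕ → QR → Option (List ℕ)
  | [], _ => some []
  | σ :: s, r => do
      let o₁ ← psiStarRev B l s (B.δR r σ)
      let o₂ ← B.ψ (dstar B.δL l s.reverse) σ r
      return o₁ ++ o₂

/-- The generalized output function `ψ*` of a bimachine (a partial function,
modelled via `Option`). -/
def psiStar {QL QR : Type} (B : Bimachine QL QR) (l : QL) (t : List ℕ) (r : QR) :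
    Option (List ℕ) :=
  psiStarRev B l t.reverse r

/-- A bimachine `B` represents the partial function `f_n^{(k)}`: for every word `w`
over `Σ_k`, the generalized output `ψ*(s_L, w, s_R)` is defined exactly when `w` is
in the domain of `f_n^{(k)}`, and it agrees with `f_n^{(k)}` wherever defined. -/
def Represents {QL QR : Type} (B : Bimachine QL QR) (k n : ℕ) : Prop :=
  ∀ w : List ℕ, w ∈ Words (SigmaFull k) →
    ((psiStar B B.sL w B.sR).isSome ↔ fDom k n w) ∧
    (∀ ω : List ℕ, fGraph k n w ω → psiStar B B.sL w B.sR = some ω)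


section AuxProofs

open List

lemma dstar_append {Q : Type} (δ : Q → ℕ → Q) (q : Q) (u v : List ℕ) :
    dstar δ q (u ++ v) = dstar δ (dstar δ q u) v := by
  simp [dstar]

lemma psiStarRev_append {QL QR : Type} (B : Bimachine QL QR) (l : QL)
    (s1 s2 : List ℕ) (r : QR) :
    psiStarRev B l (s1 ++ s2) r = do
      let o₁ ← psiStarRev B l s2 (dstar B.δR r s1)
      let o₂ ← psiStarRev B (dstar B.δL l s2.reverse) s1 r
      return o₁ ++ o₂ := by
  induction s1 generalizing r with
  | nil =>
      simp [psiStarRev, dstar]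
  | cons σ s ih =>
      show psiStarRev B l (σ :: (s ++ s2)) r = _
      rw [psiStarRev, ih]
      have hrev : (s ++ s2).reverse = s2.reverse ++ s.reverse := List.reverse_append
      have hd : dstar B.δR r (σ :: s) = dstar B.δR (B.δR r σ) s := rfl
      rw [hrev, dstar_append]
      conv_rhs => rw [psiStarRev]
      rw [show dstar B.δR r (σ :: s) = dstar B.δR (B.δR r σ) s from rfl]
      cases h1 : psiStarRev B l s2 (dstar B.δR (B.δR r σ) s) <;>
        cases h2 : psiStarRev B (dstar B.δL l s2.reverse) s (B.δR r σ) <;>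
          cases h3 : B.ψ (dstar B.δL (dstar B.δL l s2.reverse) s.reverse) σ r <;>
            simp [h1, h2, h3, List.append_assoc]

lemma psiStar_append {QL QR : Type} (B : Bimachine QL QR) (l : QL)
    (u v : List ℕ) (r : QR) :
    psiStar B l (u ++ v) r = do
      let o₁ ← psiStar B l u (dstar B.δR r v.reverse)
      let o₂ ← psiStar B (dstar B.δL l u) v r
      return o₁ ++ o₂ := by
  unfold psiStar
  rw [List.reverse_append, psiStarRev_append, List.reverse_reverse]

lemma words_append {S : Set ℕ} {u v : List ℕ} (hu : u ∈ Words S) (hv : v ∈ Words S) :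
    u ++ v ∈ Words S := by
  intro a ha
  rcases List.mem_append.1 ha with h | h
  exacts [hu a h, hv a h]

lemma words_take {S : Set ℕ} {u : List ℕ} (hu : u ∈ Words S) (m : ℕ) :
    u.take m ∈ Words S := fun a ha => hu a (List.take_subset m u ha)

lemma words_drop {S : Set ℕ} {u : List ℕ} (hu : u ∈ Words S) (m : ℕ) :
    u.drop m ∈ Words S := fun a ha => hu a (List.drop_subset m u ha)

lemma words_mono {S T : Set ℕ} (h : S ⊆ T) {u : List ℕ} (hu : u ∈ Words S) :
    u ∈ Words T := fun a ha => h (hu a ha)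

lemma lo_sub_full : SigmaLo 3 ⊆ SigmaFull 3 := fun a ha =>
  ⟨ha.1, by have := ha.2; omega⟩

lemma hi_sub_full : SigmaHi 3 ⊆ SigmaFull 3 := fun a ha =>
  ⟨by have := ha.1; omega, ha.2⟩

lemma fGraph_mk (n : ℕ) {u z w v : List ℕ} {i j : ℕ}
    (hu : u ∈ Words (SigmaLo 3)) (hi : i ∈ SigmaLo 3)
    (hz : z ∈ Words (SigmaLo 3)) (hzl : z.length = n - 1)
    (hw : w ∈ Words (SigmaHi 3)) (hwl : w.length = n - 1)
    (hj : j ∈ SigmaHi 3) (hv : v ∈ Words (SigmaHi 3)) :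
    fGraph 3 n (u ++ [i] ++ z ++ w ++ [j] ++ v) [j, i] :=
  ⟨i, j, hi.1, hi.2, hj.1, hj.2, ⟨u, z, w, v, hu, hz, hzl, hw, hwl, hv, rfl⟩, rfl⟩

lemma output_contra {i1 i2 j1 j2 : ℕ} (hi : i1 ≠ i2) (hj : j1 ≠ j2)
    {A1 A2 B1 B2 : List ℕ}
    (h11 : A1 ++ B1 = [j1, i1]) (h12 : A1 ++ B2 = [j2, i1])
    (h21 : A2 ++ B1 = [j1, i2]) : False := by
  rcases A1 with _ | ⟨a, _ | ⟨a', _ | ⟨a'', t⟩⟩⟩ <;>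
    rcases A2 with _ | ⟨c, _ | ⟨c', _ | ⟨c'', t2⟩⟩⟩ <;>
      simp_all

lemma core {QL QR : Type} (B : Bimachine QL QR) (n : ℕ) (hB : Represents B 3 n)
    {u1 u2 z1 z2 w1 w2 v1 v2 : List ℕ} {i1 i2 j1 j2 : ℕ}
    (hu1 : u1 ∈ Words (SigmaLo 3)) (hi1 : i1 ∈ SigmaLo 3)
    (hz1 : z1 ∈ Words (SigmaLo 3)) (hz1l : z1.length = n - 1)
    (hu2 : u2 ∈ Words (SigmaLo 3)) (hi2 : i2 ∈ SigmaLo 3)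
    (hz2 : z2 ∈ Words (SigmaLo 3)) (hz2l : z2.length = n - 1)
    (hw1 : w1 ∈ Words (SigmaHi 3)) (hw1l : w1.length = n - 1)
    (hj1 : j1 ∈ SigmaHi 3) (hv1 : v1 ∈ Words (SigmaHi 3))
    (hw2 : w2 ∈ Words (SigmaHi 3)) (hw2l : w2.length = n - 1)
    (hj2 : j2 ∈ SigmaHi 3) (hv2 : v2 ∈ Words (SigmaHi 3))
    (hne_i : i1 ≠ i2) (hne_j : j1 ≠ j2)
    (hL : dstar B.δL B.sL (u1 ++ [i1] ++ z1) = dstar B.δL B.sL (u2 ++ [i2] ++ z2))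
    (hR : dstar B.δR B.sR (w1 ++ [j1] ++ v1).reverse
        = dstar B.δR B.sR (w2 ++ [j2] ++ v2).reverse) : False := by
  set X1 := u1 ++ [i1] ++ z1 with hX1
  set X2 := u2 ++ [i2] ++ z2 with hX2
  set Y1 := w1 ++ [j1] ++ v1 with hY1
  set Y2 := w2 ++ [j2] ++ v2 with hY2
  have hX1lo : X1 ∈ Words (SigmaLo 3) :=
    words_append (words_append hu1 (fun a ha => by simp at ha; subst ha; exact hi1)) hz1
  have hX2lo : X2 ∈ Words (SigmaLo 3) :=
    words_append (words_append hu2 (fun a ha => by simp at ha; subst ha; exact hi2)) hz2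
  have hY1hi : Y1 ∈ Words (SigmaHi 3) :=
    words_append (words_append hw1 (fun a ha => by simp at ha; subst ha; exact hj1)) hv1
  have hY2hi : Y2 ∈ Words (SigmaHi 3) :=
    words_append (words_append hw2 (fun a ha => by simp at ha; subst ha; exact hj2)) hv2
  have hfull : ∀ (X Y : List ℕ), X ∈ Words (SigmaLo 3) → Y ∈ Words (SigmaHi 3) →
      X ++ Y ∈ Words (SigmaFull 3) := fun X Y hX hY =>
    words_append (words_mono lo_sub_full hX) (words_mono hi_sub_full hY)
  have hg11 : fGraph 3 n (X1 ++ Y1) [j1, i1] := by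
    have := fGraph_mk n hu1 hi1 hz1 hz1l hw1 hw1l hj1 hv1
    simpa [hX1, hY1, List.append_assoc] using this
  have hg12 : fGraph 3 n (X1 ++ Y2) [j2, i1] := by
    have := fGraph_mk n hu1 hi1 hz1 hz1l hw2 hw2l hj2 hv2
    simpa [hX1, hY2, List.append_assoc] using this
  have hg21 : fGraph 3 n (X2 ++ Y1) [j1, i2] := by
    have := fGraph_mk n hu2 hi2 hz2 hz2l hw1 hw1l hj1 hv1
    simpa [hX2, hY1, List.append_assoc] using this
  have e11 := (hB _ (hfull X1 Y1 hX1lo hY1hi)).2 _ hg11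
  have e12 := (hB _ (hfull X1 Y2 hX1lo hY2hi)).2 _ hg12
  have e21 := (hB _ (hfull X2 Y1 hX2lo hY1hi)).2 _ hg21
  rw [psiStar_append] at e11 e12 e21
  rw [← hR] at e12
  rw [← hL] at e21
  set r0 := dstar B.δR B.sR Y1.reverse
  set l0 := dstar B.δL B.sL X1
  cases hA1 : psiStar B B.sL X1 r0 with
  | none => rw [hA1] at e11; simp at e11
  | some A1 =>
  cases hA2 : psiStar B B.sL X2 r0 with
  | none => rw [hA2] at e21; simp at e21
  | some A2 =>
  cases hB1 : psiStar B l0 Y1 B.sR with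
  | none => rw [hA1, hB1] at e11; simp at e11
  | some B1 =>
  cases hB2 : psiStar B l0 Y2 B.sR with
  | none => rw [hA1, hB2] at e12; simp at e12
  | some B2 =>
  rw [hA1, hB1] at e11
  rw [hA1, hB2] at e12
  rw [hA2, hB1] at e21
  simp only [Option.bind_eq_bind, Option.bind_some, Option.pure_def, Option.some.injEq] at e11 e12 e21
  exact output_contra hne_i hne_j e11 e12 e21

def tripleWord (c : ℕ) {n : ℕ} (f : Fin n → Fin 3) : List ℕ :=
  List.ofFn (fun p => (f p : ℕ) + c)

lemma tripleWord_length (c : ℕ) {n : ℕ} (f : Fin n → Fin 3) :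
    (tripleWord c f).length = n := by
  rw [tripleWord, List.length_ofFn]

lemma tripleWord_inj (c : ℕ) {n : ℕ} :
    Function.Injective (tripleWord c (n := n)) := by
  intro f g h
  have h2 := List.ofFn_injective h
  funext p
  have h3 : (f p : ℕ) + c = (g p : ℕ) + c := congrFun h2 p
  exact Fin.ext (by omega)

lemma tripleWord_lo {n : ℕ} (f : Fin n → Fin 3) : tripleWord 1 f ∈ Words (SigmaLo 3) := by
  intro a ha
  obtain ⟨b, rfl⟩ := List.mem_ofFn.1 ha
  have hb := (f b).isLt
  exact ⟨by show 1 ≤ (f b : ℕ) + 1; omega, by show (f b : ℕ) + 1 ≤ 3; omega⟩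

lemma tripleWord_hi {n : ℕ} (f : Fin n → Fin 3) : tripleWord 4 f ∈ Words (SigmaHi 3) := by
  intro a ha
  obtain ⟨b, rfl⟩ := List.mem_ofFn.1 ha
  have hb := (f b).isLt
  exact ⟨by show 3 + 1 ≤ (f b : ℕ) + 4; omega, by show (f b : ℕ) + 4 ≤ 2 * 3; omega⟩

lemma replicate_lo (m : ℕ) : List.replicate m 1 ∈ Words (SigmaLo 3) := by
  intro a ha
  rw [List.eq_of_mem_replicate ha]
  exact ⟨le_refl _, by omega⟩

lemma replicate_hi (m : ℕ) : List.replicate m 4 ∈ Words (SigmaHi 3) := by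
  intro a ha
  rw [List.eq_of_mem_replicate ha]
  exact ⟨by omega, by omega⟩

lemma eq_take_getElem_drop {x : List ℕ} {p : ℕ} (h : p < x.length) :
    x = x.take p ++ [x[p]] ++ x.drop (p + 1) := by
  rw [List.append_assoc, List.singleton_append, ← List.drop_eq_getElem_cons h,
    List.take_append_drop]

lemma tripleWord_decomp (c : ℕ) {n : ℕ} (f : Fin n → Fin 3) (p : Fin n) :
    tripleWord c f = (tripleWord c f).take p ++ [(f p : ℕ) + c]
      ++ (tripleWord c f).drop (p + 1) := by
  have h : (p : ℕ) < (tripleWord c f).length := by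
    rw [tripleWord_length]; exact p.isLt
  have h2 := eq_take_getElem_drop h
  have h3 : (tripleWord c f)[(p : ℕ)]'h = (f p : ℕ) + c := by
    simp only [tripleWord, List.getElem_ofFn, Fin.eta]
  rw [h3] at h2
  exact h2

end AuxProofs

/-- For `k = 3`: every bimachine representing `f_n^{(3)}` has at least
`2^(c·(m-2)) + 1` total states, where `m = 6n + 2` and `c = (log₂ 3)/6`;
equivalently, it has at least `3^n + 1` total states. -/
theorem bimachine_lower_bound_k3 (n : ℕ) (hn : 1 ≤ n)
    (QL QR : Type) [Fintype QL] [Fintype QR]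
    (B : Bimachine QL QR) (hB : Represents B 3 n) :
    (2 : ℝ) ^ ((Real.logb 2 3 / 6) * ((6 * (n : ℝ) + 2) - 2)) + 1 ≤
        (Fintype.card QL : ℝ) + (Fintype.card QR : ℝ) ∧
    3 ^ n + 1 ≤ Fintype.card QL + Fintype.card QR := by
  have key : 3 ^ n + 1 ≤ Fintype.card QL + Fintype.card QR := by
    have hQL : 1 ≤ Fintype.card QL := @Fintype.card_pos _ _ ⟨B.sL⟩
    have hQR : 1 ≤ Fintype.card QR := @Fintype.card_pos _ _ ⟨B.sR⟩
    have hcard : Fintype.card (Fin n → Fin 3) = 3 ^ n := by simp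
    by_cases hL : Function.Injective
        (fun f : Fin n → Fin 3 => dstar B.δL B.sL (tripleWord 1 f))
    · have h := Fintype.card_le_of_injective _ hL
      rw [hcard] at h
      omega
    · obtain ⟨f, g, hfg0, hne⟩ := Function.not_injective_iff.1 hL
      have hR : Function.Injective
          (fun f : Fin n → Fin 3 => dstar B.δR B.sR (tripleWord 4 f).reverse) := by
        intro f' g' hfg0'
        by_contra hne'
        obtain ⟨p, hp⟩ := Function.ne_iff.1 hne
        obtain ⟨q, hq⟩ := Function.ne_iff.1 hne'
        set x := tripleWord 1 f with hxdef
        set x' := tripleWord 1 g with hx'def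
        set y := tripleWord 4 f' with hydef
        set y' := tripleWord 4 g' with hy'def
        have hfg : dstar B.δL B.sL x = dstar B.δL B.sL x' := hfg0
        have hfg' : dstar B.δR B.sR y.reverse = dstar B.δR B.sR y'.reverse := hfg0'
        have hxlen : x.length = n := tripleWord_length 1 f
        have hx'len : x'.length = n := tripleWord_length 1 g
        have hylen : y.length = n := tripleWord_length 4 f'
        have hy'len : y'.length = n := tripleWord_length 4 g'
        have hxlo : x ∈ Words (SigmaLo 3) := tripleWord_lo f
        have hx'lo : x' ∈ Words (SigmaLo 3) := tripleWord_lo g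
        have hyhi : y ∈ Words (SigmaHi 3) := tripleWord_hi f'
        have hy'hi : y' ∈ Words (SigmaHi 3) := tripleWord_hi g'
        have hd_x := tripleWord_decomp 1 f p
        have hd_x' := tripleWord_decomp 1 g p
        have hd_y := tripleWord_decomp 4 f' q
        have hd_y' := tripleWord_decomp 4 g' q
        rw [← hxdef] at hd_x
        rw [← hx'def] at hd_x'
        rw [← hydef] at hd_y
        rw [← hy'def] at hd_y' 
        refine core B n hB (i1 := (f p : ℕ) + 1) (i2 := (g p : ℕ) + 1)
          (j1 := (f' q : ℕ) + 4) (j2 := (g' q : ℕ) + 4)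
          (words_take hxlo (p : ℕ))
          ⟨by omega, by have := (f p).isLt; omega⟩
          (words_append (words_drop hxlo ((p : ℕ) + 1)) (replicate_lo (p : ℕ))) ?_
          (words_take hx'lo (p : ℕ))
          ⟨by omega, by have := (g p).isLt; omega⟩
          (words_append (words_drop hx'lo ((p : ℕ) + 1)) (replicate_lo (p : ℕ))) ?_
          (words_append (replicate_hi (n - 1 - (q : ℕ))) (words_take hyhi (q : ℕ))) ?_
          ⟨by omega, by have := (f' q).isLt; omega⟩
          (words_drop hyhi ((q : ℕ) + 1))
          (words_append (replicate_hi (n - 1 - (q : ℕ))) (words_take hy'hi (q : ℕ))) ?_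
          ⟨by omega, by have := (g' q).isLt; omega⟩
          (words_drop hy'hi ((q : ℕ) + 1))
          ?_ ?_ ?_ ?_
        · simp only [List.length_append, List.length_drop, List.length_replicate, hxlen]
          have := p.isLt; omega
        · simp only [List.length_append, List.length_drop, List.length_replicate, hx'len]
          have := p.isLt; omega
        · simp only [List.length_append, List.length_replicate, List.length_take, hylen]
          have := q.isLt; omega
        · simp only [List.length_append, List.length_replicate, List.length_take, hy'len]
          have := q.isLt; omega
        · intro hcon
          exact hp (Fin.ext (by omega))
        · intro hcon
          exact hq (Fin.ext (by omega))
        · have e1 : x.take (p : ℕ) ++ [(f p : ℕ) + 1]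
              ++ (x.drop ((p : ℕ) + 1) ++ List.replicate (p : ℕ) 1)
              = x ++ List.replicate (p : ℕ) 1 := by
            conv_rhs => rw [hd_x]
            simp [List.append_assoc]
          have e1' : x'.take (p : ℕ) ++ [(g p : ℕ) + 1]
              ++ (x'.drop ((p : ℕ) + 1) ++ List.replicate (p : ℕ) 1)
              = x' ++ List.replicate (p : ℕ) 1 := by
            conv_rhs => rw [hd_x']
            simp [List.append_assoc]
          rw [e1, e1', dstar_append, dstar_append, hfg]
        · have e2 : (List.replicate (n - 1 - (q : ℕ)) 4 ++ y.take (q : ℕ))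
              ++ [(f' q : ℕ) + 4] ++ y.drop ((q : ℕ) + 1)
              = List.replicate (n - 1 - (q : ℕ)) 4 ++ y := by
            conv_rhs => rw [hd_y]
            simp [List.append_assoc]
          have e2' : (List.replicate (n - 1 - (q : ℕ)) 4 ++ y'.take (q : ℕ))
              ++ [(g' q : ℕ) + 4] ++ y'.drop ((q : ℕ) + 1)
              = List.replicate (n - 1 - (q : ℕ)) 4 ++ y' := by
            conv_rhs => rw [hd_y']
            simp [List.append_assoc]
          rw [e2, e2', List.reverse_append, List.reverse_append,
            dstar_append, dstar_append, hfg']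
      have h := Fintype.card_le_of_injective _ hR
      rw [hcard] at h
      omega
  refine ⟨?_, key⟩
  have h2 : (2 : ℝ) ^ ((Real.logb 2 3 / 6) * ((6 * (n : ℝ) + 2) - 2)) = 3 ^ n := by
    have he : (Real.logb 2 3 / 6) * ((6 * (n : ℝ) + 2) - 2) = Real.logb 2 3 * (n : ℝ) := by
      ring
    rw [he, Real.rpow_mul (by norm_num),
        Real.rpow_logb (by norm_num) (by norm_num) (by norm_num),
        Real.rpow_natCast]
  rw [h2]
  have := (Nat.cast_le (α := ℝ)).2 key
  push_cast at this
  linarith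
end

section
/- Let k ≥ 2 and n ≥ 1, and let B = (A_L, A_R, ψ) be a bimachine over Σ_k representing the partial function f_n^{(k)}. Suppose β₁, β₂ ∈ (Σ''_k)* both have length ≥ n, their n-th characters counted from the beginning are distinct letters of Σ''_k, and the state of A_R reached from s_R by reading the reversal of β₁ equals the state reached by reading the reversal of β₂; call this common state p_R. Then for every word a₁a₂⋯a_m ∈ (Σ'_k)* with m ≥ n and every 0 ≤ l < m, the output ψ(δ_L*(s_L, a₁⋯a_l), a_{l+1}, r_l) equals the empty word ε, where r_l is the state of A_R reached from p_R by reading the reversal of the suffix a_{l+2}⋯a_m. -/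
section AuxLemmas

variable {QL QR : Type}

/-- Outputs contributed by a segment: `segRev B l w s r` collects the
`ψ`-outputs for the letters of the reversed segment `s`, where `w` is the part
of the input preceding the segment. -/
def segRev (B : Bimachine QL QR) (l : QL) (w : List ℕ) :
    List ℕ → QR → Option (List ℕ)
  | [], _ => some []
  | σ :: s, r => do
      let o₁ ← segRev B l w s (B.δR r σ)
      let o₂ ← B.ψ (dstar B.δL l (w ++ s.reverse)) σ r
      return o₁ ++ o₂

lemma psiStarRev_cons (B : Bimachine QL QR) (l : QL) (σ : ℕ) (s : List ℕ) (r : QR) :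
    psiStarRev B l (σ :: s) r =
      (psiStarRev B l s (B.δR r σ)).bind (fun o₁ =>
        (B.ψ (dstar B.δL l s.reverse) σ r).bind (fun o₂ => some (o₁ ++ o₂))) := rfl

lemma segRev_cons (B : Bimachine QL QR) (l : QL) (w : List ℕ) (σ : ℕ) (s : List ℕ) (r : QR) :
    segRev B l w (σ :: s) r =
      (segRev B l w s (B.δR r σ)).bind (fun o₁ =>
        (B.ψ (dstar B.δL l (w ++ s.reverse)) σ r).bind (fun o₂ => some (o₁ ++ o₂))) := rfl

/-- Splitting the generalized output over a factorization of the (reversed) input. -/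
lemma psiStarRev_append_s10 (B : Bimachine QL QR) (l : QL) (s₂ s₁ : List ℕ) (r : QR) :
    psiStarRev B l (s₂ ++ s₁) r =
      (psiStarRev B l s₁ (dstar B.δR r s₂)).bind (fun o₁ =>
        (segRev B l s₁.reverse s₂ r).bind (fun o₂ => some (o₁ ++ o₂))) := by
  induction s₂ generalizing r with
  | nil =>
      simp only [List.nil_append, segRev, dstar, List.foldl_nil]
      cases psiStarRev B l s₁ r <;> simp
  | cons σ s₂ ih =>
      rw [List.cons_append, psiStarRev_cons, segRev_cons, ih (B.δR r σ)]
      have hd : dstar B.δR r (σ :: s₂) = dstar B.δR (B.δR r σ) s₂ := rfl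
      have hrev : (s₂ ++ s₁).reverse = s₁.reverse ++ s₂.reverse := List.reverse_append
      rw [hd, hrev]
      cases psiStarRev B l s₁ (dstar B.δR (B.δR r σ) s₂) <;>
        cases segRev B l s₁.reverse s₂ (B.δR r σ) <;>
          cases B.ψ (dstar B.δL l (s₁.reverse ++ s₂.reverse)) σ r <;>
            simp

/-- If the total output on a word is empty, each individual `ψ`-output along the
word is empty. -/
lemma psi_eq_nil_of_psiStarRev (B : Bimachine QL QR) (l : QL) :
    ∀ (s₂ : List ℕ) (σ : ℕ) (s₁ : List ℕ) (r : QR),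
      psiStarRev B l (s₂ ++ σ :: s₁) r = some [] →
      B.ψ (dstar B.δL l s₁.reverse) σ (dstar B.δR r s₂) = some [] := by
  intro s₂
  induction s₂ with
  | nil =>
      intro σ s₁ r h
      rw [List.nil_append, psiStarRev_cons] at h
      rcases h1 : psiStarRev B l s₁ (B.δR r σ) with _ | o₁ <;> rw [h1] at h
      · simp at h
      rcases h2 : B.ψ (dstar B.δL l s₁.reverse) σ r with _ | o₂ <;> rw [h2] at h
      · simp at h
      simp only [Option.bind_some, Option.some.injEq] at h
      have : o₂ = [] := (List.append_eq_nil_iff.mp h).2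
      rw [this] at h2
      simpa [dstar] using h2
  | cons τ s₂ ih =>
      intro σ s₁ r h
      rw [List.cons_append, psiStarRev_cons] at h
      rcases h1 : psiStarRev B l (s₂ ++ σ :: s₁) (B.δR r τ) with _ | o₁ <;> rw [h1] at h
      · simp at h
      rcases h2 : B.ψ (dstar B.δL l (s₂ ++ σ :: s₁).reverse) τ r with _ | o₂ <;> rw [h2] at h
      · simp at h
      simp only [Option.bind_some, Option.some.injEq] at h
      have ho₁ : o₁ = [] := (List.append_eq_nil_iff.mp h).1
      rw [ho₁] at h1
      have := ih σ s₁ (B.δR r τ) h1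
      simpa [dstar] using this

/-- A word over `Σ'_k` of length `≥ n` followed by a word over `Σ''_k` whose
`n`-th letter is `a` lies in `L^{(i,a)}_n` where `i` is the `n`-th letter of
the first word counted from its end. -/
lemma graph_of_split (k n : ℕ) (hn : 1 ≤ n) (w β : List ℕ)
    (hw : w ∈ Words (SigmaLo k)) (hβ : β ∈ Words (SigmaHi k))
    (hwn : n ≤ w.length) (hβn : n ≤ β.length)
    (a : ℕ) (ha : β[n - 1]? = some a)
    (i : ℕ) (hi : w[w.length - n]? = some i) :
    fGraph k n (w ++ β) [a, i] := by
  have hiw : i ∈ w := List.mem_of_getElem? hi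
  have haβ : a ∈ β := List.mem_of_getElem? ha
  have hiS : 1 ≤ i ∧ i ≤ k := hw i hiw
  have haS : k + 1 ≤ a ∧ a ≤ 2 * k := hβ a haβ
  refine ⟨i, a, hiS.1, hiS.2, haS.1, haS.2, ?_, rfl⟩
  have hilt : w.length - n < w.length := by omega
  have halt : n - 1 < β.length := by omega
  have hieq : w[w.length - n] = i := by
    rw [List.getElem?_eq_getElem hilt] at hi; exact Option.some.inj hi
  have haeq : β[n - 1] = a := by
    rw [List.getElem?_eq_getElem halt] at ha; exact Option.some.inj ha
  refine ⟨w.take (w.length - n), w.drop (w.length - n + 1),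
    β.take (n - 1), β.drop n, ?_, ?_, ?_, ?_, ?_, ?_, ?_⟩
  · exact fun x hx => hw x (List.mem_of_mem_take hx)
  · exact fun x hx => hw x (List.mem_of_mem_drop hx)
  · simp; omega
  · exact fun x hx => hβ x (List.mem_of_mem_take hx)
  · simp; omega
  · exact fun x hx => hβ x (List.mem_of_mem_drop hx)
  · have hw' : w = w.take (w.length - n) ++ i :: w.drop (w.length - n + 1) := by
      rw [← hieq, ← List.drop_eq_getElem_cons hilt, List.take_append_drop]
    have hβ' : β = β.take (n - 1) ++ a :: β.drop n := by
      have he : n - 1 + 1 = n := by omega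
      have hd : β.drop (n - 1) = β[n - 1] :: β.drop (n - 1 + 1) :=
        List.drop_eq_getElem_cons halt
      rw [haeq, he] at hd
      conv_lhs => rw [← List.take_append_drop (n - 1) β, hd]
    conv_lhs => rw [hw', hβ']
    simp

lemma mem_full_of_split (k : ℕ) (w β : List ℕ)
    (hw : w ∈ Words (SigmaLo k)) (hβ : β ∈ Words (SigmaHi k)) :
    w ++ β ∈ Words (SigmaFull k) := by
  intro x hx
  rcases List.mem_append.mp hx with h | h
  · have h' : 1 ≤ x ∧ x ≤ k := hw x h
    exact ⟨h'.1, by omega⟩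
  · have h' : k + 1 ≤ x ∧ x ≤ 2 * k := hβ x h
    exact ⟨by omega, h'.2⟩

end AuxLemmas

/-- If a bimachine represents `f_n^{(k)}` and the words `β₁, β₂` over `Σ''_k`
(of length `≥ n`, with distinct `n`-th characters from the beginning) lead the
right automaton, reading their reversals, to the same state `p_R`, then on any
word over `Σ'_k` of length `≥ n` every individual output `ψ` produced along it
is the empty word. -/
theorem psi_empty_on_left_block (k n : ℕ) (hk : 2 ≤ k) (hn : 1 ≤ n)
    (QL QR : Type) (B : Bimachine QL QR) (hB : Represents B k n)
    (β₁ β₂ : List ℕ)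
    (hβ₁ : β₁ ∈ Words (SigmaHi k)) (hβ₂ : β₂ ∈ Words (SigmaHi k))
    (hl₁ : n ≤ β₁.length) (hl₂ : n ≤ β₂.length)
    (a b : ℕ) (ha : β₁[n - 1]? = some a) (hb : β₂[n - 1]? = some b)
    (haS : a ∈ SigmaHi k) (hbS : b ∈ SigmaHi k) (hab : a ≠ b)
    (pR : QR) (hp₁ : dstar B.δR B.sR β₁.reverse = pR)
    (hp₂ : dstar B.δR B.sR β₂.reverse = pR)
    (w : List ℕ) (hw : w ∈ Words (SigmaLo k)) (hwn : n ≤ w.length)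
    (l : ℕ) (hl : l < w.length) (c : ℕ) (hc : w[l]? = some c) :
    B.ψ (dstar B.δL B.sL (w.take l)) c
        (dstar B.δR pR ((w.drop (l + 1)).reverse)) = some [] := by
  -- the letter `i` of `w` at position `w.length - n`
  have hilt : w.length - n < w.length := by omega
  set i := w[w.length - n]'hilt with hidef
  have hi : w[w.length - n]? = some i := List.getElem?_eq_getElem hilt
  have hfull₁ := mem_full_of_split k w β₁ hw hβ₁
  have hfull₂ := mem_full_of_split k w β₂ hw hβ₂
  have h₁ : psiStar B B.sL (w ++ β₁) B.sR = some [a, i] :=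
    (hB _ hfull₁).2 _ (graph_of_split k n hn w β₁ hw hβ₁ hwn hl₁ a ha i hi)
  have h₂ : psiStar B B.sL (w ++ β₂) B.sR = some [b, i] :=
    (hB _ hfull₂).2 _ (graph_of_split k n hn w β₂ hw hβ₂ hwn hl₂ b hb i hi)
  have split : ∀ β : List ℕ, psiStar B B.sL (w ++ β) B.sR =
      (psiStarRev B B.sL w.reverse (dstar B.δR B.sR β.reverse)).bind (fun o₁ =>
        (segRev B B.sL w β.reverse B.sR).bind (fun o₂ => some (o₁ ++ o₂))) := by
    intro β
    rw [psiStar, List.reverse_append, psiStarRev_append_s10, List.reverse_reverse]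
  rw [split β₁, hp₁] at h₁
  rw [split β₂, hp₂] at h₂
  have hP : psiStarRev B B.sL w.reverse pR = some [] := by
    rcases hW : psiStarRev B B.sL w.reverse pR with _ | W <;> rw [hW] at h₁ h₂
    · simp at h₁
    rcases hY₁ : segRev B B.sL w β₁.reverse B.sR with _ | Y₁ <;> rw [hY₁] at h₁
    · simp at h₁
    rcases hY₂ : segRev B B.sL w β₂.reverse B.sR with _ | Y₂ <;> rw [hY₂] at h₂
    · simp at h₂
    simp only [Option.bind_some, Option.some.injEq] at h₁ h₂
    cases W with
    | nil => rfl
    | cons x W' =>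
        exfalso
        have e₁ : x = a := by
          have hh : x :: (W' ++ Y₁) = [a, i] := by simpa using h₁
          exact (List.cons_eq_cons.mp hh).1
        have e₂ : x = b := by
          have hh : x :: (W' ++ Y₂) = [b, i] := by simpa using h₂
          exact (List.cons_eq_cons.mp hh).1
        exact hab (e₁ ▸ e₂)
  have hceq : w[l] = c := by
    rw [List.getElem?_eq_getElem hl] at hc; exact Option.some.inj hc
  have hw' : w = w.take l ++ c :: w.drop (l + 1) := by
    rw [← hceq, ← List.drop_eq_getElem_cons hl, List.take_append_drop]
  have hrev : w.reverse = (w.drop (l + 1)).reverse ++ c :: (w.take l).reverse := by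
    conv_lhs => rw [hw']
    simp
  rw [hrev] at hP
  have := psi_eq_nil_of_psiStarRev B B.sL ((w.drop (l + 1)).reverse) c
    ((w.take l).reverse) pR hP
  simpa using this
end
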